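/- arXiv:1902.06941 — 3 statements merged into one kernel-verified Lean document; each statement's English description precedes it below -/
import Mathlib

section
/- Let X be an integrable real-valued random variable with continuous distribution function, α ∈ (0,1), and U : ℝ → ℝ increasing and continuous with U(X) integrable, such that Assumption (A) holds. Then ρ_U^α(X) = U^{-1}(CTE_α(U(X))), where CTE_α(U(X)) = E[U(X) | U(X) ≥ VaR_α(U(X))]. -/
open MeasureTheory Real Set

/-- Value at Risk at level `α`: `VaR_α(X) = inf {x | F_X(x) ≥ α}`. -/
noncomputable def VaR {Ω : Type*} [MeasurableSpace Ω] (P : Measure Ω) (X : Ω → ℝ) (α : ℝ) : ℝ :=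
  sInf {x : ℝ | α ≤ (P {ω | X ω ≤ x}).toReal}

/-- The cumulative distribution function of `X` under `P`. -/
noncomputable def cdfR {Ω : Type*} [MeasurableSpace Ω] (P : Measure Ω) (X : Ω → ℝ) (x : ℝ) : ℝ :=
  (P {ω | X ω ≤ x}).toReal

/-- Conditional expectation of `f` given the event `A`: `E[f | A]`. -/
noncomputable def condExpOn {Ω : Type*} [MeasurableSpace Ω] (P : Measure Ω) (f : Ω → ℝ)
    (A : Set Ω) : ℝ :=
  (∫ ω in A, f ω ∂P) / (P A).toReal

/-- The tail event `{X ≥ VaR_α(X)}`. -/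
def tailEvent {Ω : Type*} [MeasurableSpace Ω] (P : Measure Ω) (X : Ω → ℝ) (α : ℝ) : Set Ω :=
  {ω | VaR P X α ≤ X ω}

/-- Generalized inverse `U⁻¹(y) = inf {x | U(x) ≥ y}`. -/
noncomputable def ginv (U : ℝ → ℝ) (y : ℝ) : ℝ := sInf {x : ℝ | y ≤ U x}

/-- Tail Quasi-Linear Mean `ρ_U^α(X) = U⁻¹(E[U(X) | X ≥ VaR_α(X)])`. -/
noncomputable def TQLM {Ω : Type*} [MeasurableSpace Ω] (P : Measure Ω) (X : Ω → ℝ) (α : ℝ)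
    (U : ℝ → ℝ) : ℝ :=
  ginv U (condExpOn P (fun ω => U (X ω)) (tailEvent P X α))

/-- Conditional Tail Expectation `CTE_α(X) = E[X | X ≥ VaR_α(X)]`. -/
noncomputable def CTE {Ω : Type*} [MeasurableSpace Ω] (P : Measure Ω) (X : Ω → ℝ) (α : ℝ) : ℝ :=
  condExpOn P X (tailEvent P X α)

/-- Tail Conditional Entropic Risk Measure `ρ_γ^α(X) = (1/γ) log E[e^{γX} | X ≥ VaR_α(X)]`. -/
noncomputable def TCERM {Ω : Type*} [MeasurableSpace Ω] (P : Measure Ω) (X : Ω → ℝ) (α : ℝ)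
    (γ : ℝ) : ℝ :=
  (1 / γ) * Real.log (condExpOn P (fun ω => Real.exp (γ * X ω)) (tailEvent P X α))

/-!
The tail events `{U(X) ≥ VaR_α(U(X))}` and `{X ≥ VaR_α(X)}` coincide, so both sides are `U⁻¹`
of the same conditional expectation. Since the distribution function is right-continuous,
`v = VaR_α(X)` satisfies `F_X(v) ≥ α` while `F_X(x) < α` for `x < v`; together with the left
continuity of `U` at `v` this makes `U(v)` the `α`-quantile of `U(X)`. Assumption (A) rules out
`U` being flat just below `v`, so `U(v) ≤ U(x)` forces `v ≤ x`.
-/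

open ProbabilityTheory Filter Topology

theorem Monotone.le_iff_le_of_strictMonoOn_Ioo {β γ : Type*} [LinearOrder β] [DenselyOrdered β]
    [Preorder γ] {U : β → γ} (hU : Monotone U) {a v : β} (hav : a < v)
    (hsm : StrictMonoOn U (Ioo a v)) (x : β) : U v ≤ U x ↔ v ≤ x := by
  refine ⟨fun h => ?_, fun h => hU h⟩
  by_contra! hxv
  obtain ⟨t₁, ht₁, ht₁v⟩ := exists_between (max_lt hxv hav)
  obtain ⟨t₂, ht₁₂, ht₂v⟩ := exists_between ht₁v
  have ha₁ : a < t₁ := (le_max_right _ _).trans_lt ht₁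
  have hUxv : U x < U v :=
    calc U x ≤ U t₁ := hU ((le_max_left _ _).trans ht₁.le)
      _ < U t₂ := hsm ⟨ha₁, ht₁v⟩ ⟨ha₁.trans ht₁₂, ht₂v⟩ ht₁₂
      _ ≤ U v := hU ht₂v.le
  exact hUxv.not_ge h

namespace StieltjesFunction

theorem le_apply_csInf_setOf_le (f : StieltjesFunction ℝ) {α : ℝ}
    (hne : {x | α ≤ f x}.Nonempty) :
    α ≤ f (sInf {x | α ≤ f x}) := by
  refine ge_of_tendsto ((f.right_continuous _).mono Ioi_subset_Ici_self) ?_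
  filter_upwards [self_mem_nhdsWithin] with x hx
  obtain ⟨s, hs, hsx⟩ := exists_lt_of_csInf_lt hne hx
  exact hs.trans (f.mono hsx.le)

end StieltjesFunction

namespace ProbabilityTheory

variable {α : ℝ}

theorem nonempty_setOf_le_cdf (μ : Measure ℝ) (hα : α < 1) : {x | α ≤ cdf μ x}.Nonempty :=
  ((tendsto_cdf_atTop μ).eventually (eventually_ge_nhds hα)).exists

theorem bddBelow_setOf_le_cdf (μ : Measure ℝ) (hα : 0 < α) : BddBelow {x | α ≤ cdf μ x} := by
  obtain ⟨x₀, hx₀⟩ := eventually_atBot.1 ((tendsto_cdf_atBot μ).eventually (eventually_lt_nhds hα))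
  exact ⟨x₀, fun x hx => le_of_not_gt fun hlt => (hx₀ x hlt.le).not_ge hx⟩

end ProbabilityTheory

section VaR

variable {Ω : Type*} [MeasurableSpace Ω] {P : Measure Ω} [IsProbabilityMeasure P] {X : Ω → ℝ}
  {α : ℝ}

theorem cdfR_eq_cdf_map (hX : AEMeasurable X P) : cdfR P X = cdf (P.map X) := by
  have := Measure.isProbabilityMeasure_map (μ := P) hX
  ext x
  rw [cdf_eq_real, map_measureReal_apply_of_aemeasurable hX measurableSet_Iic]
  rfl

theorem VaR_eq_sInf_setOf_le_cdf_map (hX : AEMeasurable X P) :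
    VaR P X α = sInf {x | α ≤ cdf (P.map X) x} := by
  rw [← cdfR_eq_cdf_map hX]
  rfl

theorem le_cdfR_VaR (hX : AEMeasurable X P) (hα : α < 1) : α ≤ cdfR P X (VaR P X α) := by
  rw [VaR_eq_sInf_setOf_le_cdf_map hX, cdfR_eq_cdf_map hX]
  exact (cdf _).le_apply_csInf_setOf_le (nonempty_setOf_le_cdf _ hα)

theorem cdfR_lt_of_lt_VaR (hX : AEMeasurable X P) (hα : 0 < α) {x : ℝ} (hx : x < VaR P X α) :
    cdfR P X x < α := by
  rw [VaR_eq_sInf_setOf_le_cdf_map hX] at hx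
  rw [cdfR_eq_cdf_map hX]
  have hxS := notMem_of_lt_csInf hx (bddBelow_setOf_le_cdf _ hα)
  exact not_le.1 hxS

theorem VaR_comp_eq (hX : AEMeasurable X P) (hα : α ∈ Ioo 0 1) {U : ℝ → ℝ} (hU : Monotone U)
    (hUc : ContinuousWithinAt U (Iio (VaR P X α)) (VaR P X α)) :
    VaR P (fun ω => U (X ω)) α = U (VaR P X α) := by
  refine IsLeast.csInf_eq ⟨?_, fun y hy => ?_⟩
  · exact (le_cdfR_VaR hX hα.2).trans (measureReal_mono fun ω hω => hU hω)
  · by_contra! hyv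
    obtain ⟨x₀, hyx₀, hx₀v⟩ :=
      ((hUc.eventually (eventually_gt_nhds hyv)).and self_mem_nhdsWithin).exists
    have hsub : {ω | U (X ω) ≤ y} ⊆ {ω | X ω ≤ x₀} := fun ω hω =>
      le_of_not_gt fun hlt => (hU hlt.le).not_gt (lt_of_le_of_lt hω hyx₀)
    exact (cdfR_lt_of_lt_VaR hX hα.1 hx₀v).not_ge (hy.trans (measureReal_mono hsub))

theorem tailEvent_comp_eq (hX : AEMeasurable X P) (hα : α ∈ Ioo 0 1) {U : ℝ → ℝ}
    (hU : Monotone U) (hUc : ContinuousWithinAt U (Iio (VaR P X α)) (VaR P X α))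
    (hA : ∃ a < VaR P X α, StrictMonoOn U (Ioo a (VaR P X α))) :
    tailEvent P (fun ω => U (X ω)) α = tailEvent P X α := by
  obtain ⟨a, hav, hsm⟩ := hA
  ext ω
  change VaR P (fun ω => U (X ω)) α ≤ U (X ω) ↔ VaR P X α ≤ X ω
  rw [VaR_comp_eq hX hα hU hUc]
  exact hU.le_iff_le_of_strictMonoOn_Ioo hav hsm (X ω)

end VaR

theorem TQLM_eq_ginv_CTE_general
    {Ω : Type*} [MeasurableSpace Ω] (P : Measure Ω) [IsProbabilityMeasure P]
    (X : Ω → ℝ) (hX : Measurable X)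
    (α : ℝ) (hα : α ∈ Set.Ioo (0:ℝ) 1)
    (U : ℝ → ℝ) (hU : Monotone U) (hUc : Continuous U)
    (hA : ∃ ε > 0, StrictMonoOn U (Set.Ioo (VaR P X α - ε) (VaR P X α))) :
    TQLM P X α U = ginv U (CTE P (fun ω => U (X ω)) α) := by
  obtain ⟨ε, hε, hsm⟩ := hA
  have htail := tailEvent_comp_eq hX.aemeasurable hα hU hUc.continuousAt.continuousWithinAt
    ⟨_, sub_lt_self _ hε, hsm⟩
  rw [TQLM, CTE, htail]

/-- Under Assumption (A), `ρ_U^α(X) = U⁻¹(CTE_α(U(X)))`. -/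
theorem TQLM_eq_ginv_CTE
    {Ω : Type*} [MeasurableSpace Ω] (P : Measure Ω) [IsProbabilityMeasure P]
    (X : Ω → ℝ) (hX : Measurable X) (hXint : Integrable X P)
    (hFX : Continuous (cdfR P X))
    (α : ℝ) (hα : α ∈ Set.Ioo (0:ℝ) 1)
    (U : ℝ → ℝ) (hU : Monotone U) (hUc : Continuous U)
    (hUXint : Integrable (fun ω => U (X ω)) P)
    (hA : ∃ ε > 0, StrictMonoOn U (Set.Ioo (VaR P X α - ε) (VaR P X α))) :
    TQLM P X α U = ginv U (CTE P (fun ω => U (X ω)) α) :=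
  TQLM_eq_ginv_CTE_general P X hX α hα U hU hUc hA
end

section
/- Let X be a strictly positive random variable with continuous distribution function, α ∈ (0,1), and let U(x) = x^γ/γ for x > 0 with γ ≠ 0 (or U(x) = log x), with U(X) integrable. Then the Tail Quasi-Linear Mean is positively homogeneous: for every λ > 0, ρ_U^α(λX) = λ ρ_U^α(X). -/
open MeasureTheory Real Set

/-- Generalized inverse on `(0,∞)`: `U⁻¹(y) = inf {x > 0 | U(x) ≥ y}`. -/
noncomputable def ginvPos (U : ℝ → ℝ) (y : ℝ) : ℝ := sInf {x : ℝ | 0 < x ∧ y ≤ U x}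

/-- TQLM for a utility defined on `(0,∞)`. -/
noncomputable def TQLMpos {Ω : Type*} [MeasurableSpace Ω] (P : Measure Ω) (X : Ω → ℝ)
    (α : ℝ) (U : ℝ → ℝ) : ℝ :=
  ginvPos U (condExpOn P (fun ω => U (X ω)) (tailEvent P X α))

/-!
Power and logarithmic utilities turn scaling into an increasing affine map of utilities:
`U (λ x) = a U(x) + b` with `a > 0`. Scaling `X` by `λ` scales `VaR` by `λ` and so leaves the
tail event unchanged; hence the conditional mean of `U(λX)` is `a m + b`, where `m` is that of
`U(X)` (the tail event has positive probability, so the constant `b` survives the division),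
and the generalized inverse of `a y + b` is `λ` times that of `y`.
-/

open Pointwise

section Scaling

variable {Ω : Type*} [MeasurableSpace Ω]

lemma VaR_const_mul (P : Measure Ω) (X : Ω → ℝ) (α : ℝ) {lam : ℝ} (hlam : 0 < lam) :
    VaR P (fun ω => lam * X ω) α = lam * VaR P X α := by
  have hset : {x : ℝ | α ≤ (P {ω | lam * X ω ≤ x}).toReal}
      = lam • {x : ℝ | α ≤ (P {ω | X ω ≤ x}).toReal} := by
    ext x
    simp only [Set.mem_smul_set_iff_inv_smul_mem₀ hlam.ne', smul_eq_mul, Set.mem_ofPred_eq,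
      le_inv_mul_iff₀ hlam]
  rw [VaR, VaR, hset, Real.sInf_smul_of_nonneg hlam.le, smul_eq_mul]

lemma tailEvent_const_mul (P : Measure Ω) (X : Ω → ℝ) (α : ℝ) {lam : ℝ} (hlam : 0 < lam) :
    tailEvent P (fun ω => lam * X ω) α = tailEvent P X α := by
  ext ω
  simp only [tailEvent, VaR_const_mul P X α hlam, Set.mem_ofPred_eq, mul_le_mul_iff_right₀ hlam]

end Scaling

section TailEvent

variable {Ω : Type*} [MeasurableSpace Ω] (P : Measure Ω) {X : Ω → ℝ} {α : ℝ}

lemma bddBelow_setOf_le_cdfR (hXpos : ∀ ω, 0 < X ω) (hα : 0 < α) :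
    BddBelow {x : ℝ | α ≤ cdfR P X x} := by
  refine ⟨0, fun x hx => le_of_not_gt fun hx0 => hα.not_ge ?_⟩
  have hempty : {ω | X ω ≤ x} = ∅ :=
    Set.eq_empty_of_forall_notMem fun ω hω => (hx0.trans (hXpos ω)).not_ge hω
  simpa [cdfR, hempty] using hx

lemma measure_lt_VaR_le [IsFiniteMeasure P] (hbdd : BddBelow {x : ℝ | α ≤ cdfR P X x})
    (hα : 0 ≤ α) : P {ω | X ω < VaR P X α} ≤ ENNReal.ofReal α := by
  obtain ⟨u, hu_mono, hu_lt, hu_lim⟩ := exists_seq_strictMono_tendsto (VaR P X α)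
  have hunion : {ω | X ω < VaR P X α} = ⋃ n, {ω | X ω ≤ u n} := by
    ext ω
    simp only [Set.mem_ofPred_eq, Set.mem_iUnion]
    refine ⟨fun hω => ((tendsto_order.1 hu_lim).1 _ hω).exists.imp fun _ => le_of_lt,
      fun ⟨n, hn⟩ => hn.trans_lt (hu_lt n)⟩
  have hmono : Monotone fun n => {ω | X ω ≤ u n} :=
    fun _ _ hnm _ hω => le_trans hω (hu_mono.monotone hnm)
  rw [hunion, hmono.measure_iUnion]
  refine iSup_le fun n => (ENNReal.le_ofReal_iff_toReal_le (measure_ne_top P _) hα).2 ?_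
  -- below `VaR` the distribution function has not yet reached `α`
  exact le_of_not_gt fun h => (hu_lt n).not_ge (csInf_le hbdd h.le)

lemma measure_tailEvent_ne_zero [IsProbabilityMeasure P] (hXpos : ∀ ω, 0 < X ω)
    (hα : α ∈ Set.Ioo (0 : ℝ) 1) : P (tailEvent P X α) ≠ 0 := by
  intro h0
  have hcover : Set.univ = tailEvent P X α ∪ {ω | X ω < VaR P X α} := by
    ext ω
    simp [tailEvent, le_or_gt]
  have : (1 : ENNReal) ≤ ENNReal.ofReal α := by
    calc (1 : ENNReal) = P Set.univ := measure_univ.symm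
      _ ≤ P (tailEvent P X α) + P {ω | X ω < VaR P X α} := hcover ▸ measure_union_le _ _
      _ ≤ ENNReal.ofReal α := by
        rw [h0, zero_add]
        exact measure_lt_VaR_le P (bddBelow_setOf_le_cdfR P hXpos hα.1) hα.1.le
  exact (ENNReal.ofReal_lt_one.2 hα.2).not_ge this

end TailEvent

lemma condExpOn_affine {Ω : Type*} [MeasurableSpace Ω] {P : Measure Ω} [IsFiniteMeasure P]
    {f : Ω → ℝ} {A : Set Ω} (hA : P A ≠ 0) (hf : IntegrableOn f A P) (a b : ℝ) :
    condExpOn P (fun ω => a * f ω + b) A = a * condExpOn P f A + b := by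
  have hA' : (P A).toReal ≠ 0 := ENNReal.toReal_ne_zero.2 ⟨hA, measure_ne_top P A⟩
  rw [condExpOn, condExpOn, integral_add (hf.const_mul a) (integrableOn_const (measure_ne_top P A)),
    integral_const_mul, setIntegral_const, smul_eq_mul, measureReal_def]
  field_simp

lemma ginvPos_affine {U : ℝ → ℝ} {lam a b : ℝ} (hlam : 0 < lam) (ha : 0 < a)
    (hU : ∀ x, 0 < x → U (lam * x) = a * U x + b) (y : ℝ) :
    ginvPos U (a * y + b) = lam * ginvPos U y := by
  have hset : {x : ℝ | 0 < x ∧ a * y + b ≤ U x} = lam • {x : ℝ | 0 < x ∧ y ≤ U x} := by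
    ext x
    simp only [Set.mem_smul_set, Set.mem_ofPred_eq, smul_eq_mul]
    constructor
    · rintro ⟨hx, hxy⟩
      have hx' : lam * (x / lam) = x := mul_div_cancel₀ x hlam.ne'
      refine ⟨x / lam, ⟨div_pos hx hlam, ?_⟩, hx'⟩
      rw [← hx', hU _ (div_pos hx hlam)] at hxy
      exact le_of_mul_le_mul_left (by linarith) ha
    · rintro ⟨x, ⟨hx, hxy⟩, rfl⟩
      refine ⟨mul_pos hlam hx, ?_⟩
      rw [hU x hx]
      gcongr
  rw [ginvPos, ginvPos, hset, Real.sInf_smul_of_nonneg hlam.le, smul_eq_mul]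

lemma exists_affine_of_power_or_log {U : ℝ → ℝ}
    (hU : (∃ γ : ℝ, γ ≠ 0 ∧ ∀ x : ℝ, 0 < x → U x = x ^ γ / γ) ∨
          (∀ x : ℝ, 0 < x → U x = Real.log x))
    {lam : ℝ} (hlam : 0 < lam) :
    ∃ a b : ℝ, 0 < a ∧ ∀ x, 0 < x → U (lam * x) = a * U x + b := by
  rcases hU with ⟨γ, -, hpow⟩ | hlog
  · refine ⟨lam ^ γ, 0, Real.rpow_pos_of_pos hlam γ, fun x hx => ?_⟩
    rw [hpow _ (mul_pos hlam hx), hpow x hx, Real.mul_rpow hlam.le hx.le]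
    ring
  · refine ⟨1, Real.log lam, one_pos, fun x hx => ?_⟩
    rw [hlog _ (mul_pos hlam hx), hlog x hx, Real.log_mul hlam.ne' hx.ne']
    ring

theorem TQLM_positively_homogeneous_general
    {Ω : Type*} [MeasurableSpace Ω] (P : Measure Ω) [IsProbabilityMeasure P]
    (X : Ω → ℝ) (hXpos : ∀ ω, 0 < X ω)
    (α : ℝ) (hα : α ∈ Set.Ioo (0:ℝ) 1)
    (U : ℝ → ℝ)
    (hU : (∃ γ : ℝ, γ ≠ 0 ∧ ∀ x : ℝ, 0 < x → U x = x ^ γ / γ) ∨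
          (∀ x : ℝ, 0 < x → U x = Real.log x))
    (hUXint : Integrable (fun ω => U (X ω)) P)
    (lam : ℝ) (hlam : 0 < lam) :
    TQLMpos P (fun ω => lam * X ω) α U = lam * TQLMpos P X α U := by
  obtain ⟨a, b, ha, hab⟩ := exists_affine_of_power_or_log hU hlam
  have hcond : condExpOn P (fun ω => U (lam * X ω)) (tailEvent P X α)
      = a * condExpOn P (fun ω => U (X ω)) (tailEvent P X α) + b := by
    simp_rw [hab _ (hXpos _)]
    exact condExpOn_affine (measure_tailEvent_ne_zero P hXpos hα) hUXint.integrableOn a b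
  rw [TQLMpos, TQLMpos, tailEvent_const_mul P X α hlam, hcond, ginvPos_affine hlam ha hab]

/-- For `U(x) = x^γ/γ` (`γ ≠ 0`) or `U(x) = log x` on `(0,∞)`,
the Tail Quasi-Linear Mean is positively homogeneous: `ρ_U^α(λX) = λ ρ_U^α(X)`
for all `λ > 0`. -/
theorem TQLM_positively_homogeneous
    {Ω : Type*} [MeasurableSpace Ω] (P : Measure Ω) [IsProbabilityMeasure P]
    (X : Ω → ℝ) (hX : Measurable X) (hXpos : ∀ ω, 0 < X ω)
    (hFX : Continuous (cdfR P X))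
    (α : ℝ) (hα : α ∈ Set.Ioo (0:ℝ) 1)
    (U : ℝ → ℝ)
    (hU : (∃ γ : ℝ, γ ≠ 0 ∧ ∀ x : ℝ, 0 < x → U x = x ^ γ / γ) ∨
          (∀ x : ℝ, 0 < x → U x = Real.log x))
    (hUXint : Integrable (fun ω => U (X ω)) P)
    (lam : ℝ) (hlam : 0 < lam)
    (hUlamXint : Integrable (fun ω => U (lam * X ω)) P) :
    TQLMpos P (fun ω => lam * X ω) α U = lam * TQLMpos P X α U :=
  TQLM_positively_homogeneous_general P X hXpos α hα U hU hUXint lam hlam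
end

section
/- Let γ > 0, α ∈ (0,1), and let X, Y be comonotone random variables, say X = F_X^{-1}(V) and Y = F_Y^{-1}(V) for V uniformly distributed on (0,1), with continuous distribution functions, such that (1−t)X + tY has a continuous distribution function for every t ∈ [0,1] and all relevant exponential moments are finite. Then the Tail Conditional Entropic Risk Measure is convex along this pair: for every λ ∈ [0,1], ρ_γ^α(λX + (1−λ)Y) ≤ λ ρ_γ^α(X) + (1−λ) ρ_γ^α(Y). -/
/-!
Let `A = {V > α}`. A continuous distribution function gives `P(Z ≥ VaR_α Z) = 1 - α`, and for
`Z = h(V)` with `h` increasing the tail event is the preimage under `V` of an upper set of `ℝ`.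
Upper sets are nested, so this tail event and `A`, which also has probability `1 - α`, agree up to
a null set. Hence `X`, `Y` and every mixture share the conditioning event `A`, and on a fixed event
`(1/γ) log E[e^{γZ} | A]` is convex by Hölder's inequality
`E[e^{λa + (1-λ)b}] ≤ E[e^a]^λ E[e^b]^(1-λ)`.
-/

open MeasureTheory Real Set

open ProbabilityTheory Filter Topology

section TailEvent

variable {Ω : Type*} [MeasurableSpace Ω] {P : Measure Ω} [IsProbabilityMeasure P]
  {Z : Ω → ℝ} {α : ℝ}

lemma cdfR_eq_cdf_map_s12 (hZ : Measurable Z) : cdfR P Z = cdf (P.map Z) := by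
  have := Measure.isProbabilityMeasure_map (μ := P) hZ.aemeasurable
  funext x
  rw [cdf_eq_real, measureReal_def, Measure.map_apply hZ measurableSet_Iic]
  rfl

lemma cdfR_VaR (hZ : Measurable Z) (hF : Continuous (cdfR P Z)) (hα : α ∈ Ioo (0 : ℝ) 1) :
    cdfR P Z (VaR P Z α) = α := by
  have := Measure.isProbabilityMeasure_map (μ := P) hZ.aemeasurable
  have hVaR : VaR P Z α = sInf (cdfR P Z ⁻¹' Ici α) := rfl
  rw [cdfR_eq_cdf_map_s12 hZ] at hF hVaR ⊢
  set S := cdf (P.map Z) ⁻¹' Ici α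
  have hS_nonempty : S.Nonempty :=
    ((tendsto_cdf_atTop _).eventually (eventually_ge_nhds hα.2)).exists
  have hS_bdd : BddBelow S := by
    obtain ⟨a, ha⟩ := eventually_atBot.1
      ((tendsto_cdf_atBot (P.map Z)).eventually (eventually_lt_nhds hα.1))
    exact ⟨a, fun x hx => le_of_not_gt fun hxa => not_le.2 (ha x hxa.le) hx⟩
  have hmem : VaR P Z α ∈ S := hVaR ▸ (isClosed_Ici.preimage hF).csInf_mem hS_nonempty hS_bdd
  refine le_antisymm ?_ hmem
  have hleft : ∀ x ∈ Iio (VaR P Z α), cdf (P.map Z) x ≤ α := fun x hx =>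
    (not_le.1 (notMem_of_lt_csInf (s := S) (hx.trans_eq hVaR) hS_bdd)).le
  exact le_of_tendsto (hF.continuousAt.tendsto.mono_left nhdsWithin_le_nhds)
    (eventually_nhdsWithin_of_forall hleft)

lemma measure_tailEvent (hZ : Measurable Z) (hF : Continuous (cdfR P Z))
    (hα : α ∈ Ioo (0 : ℝ) 1) : P (tailEvent P Z α) = ENNReal.ofReal (1 - α) := by
  have := Measure.isProbabilityMeasure_map (μ := P) hZ.aemeasurable
  have hcdf := cdfR_VaR hZ hF hα
  rw [cdfR_eq_cdf_map_s12 hZ] at hF hcdf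
  rw [show tailEvent P Z α = Z ⁻¹' Ici (VaR P Z α) from rfl,
    ← Measure.map_apply hZ measurableSet_Ici, ← measure_cdf (P.map Z),
    StieltjesFunction.measure_Ici _ (tendsto_cdf_atTop _), hF.continuousWithinAt.leftLim_eq, hcdf]

lemma tailEvent_ae_eq_preimage_Ioi {V : Ω → ℝ} (hV : Measurable V) {h : ℝ → ℝ} (hh : Monotone h)
    (hF : Continuous (cdfR P (fun ω => h (V ω)))) (hα : α ∈ Ioo (0 : ℝ) 1)
    (hVα : P (V ⁻¹' Ioi α) = ENNReal.ofReal (1 - α)) :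
    tailEvent P (fun ω => h (V ω)) α =ᵐ[P] V ⁻¹' Ioi α := by
  set T := {u | VaR P (fun ω => h (V ω)) α ≤ h u}
  have hT : IsUpperSet T := fun _ _ hab ha => ha.trans (hh hab)
  have hmeas : P (V ⁻¹' T) = P (V ⁻¹' Ioi α) :=
    (measure_tailEvent (hh.measurable.comp hV) hF hα).trans hVα.symm
  have hTm : NullMeasurableSet (V ⁻¹' T) P := (hV hT.ordConnected.measurableSet).nullMeasurableSet
  have hIm : NullMeasurableSet (V ⁻¹' Ioi α) P := (hV measurableSet_Ioi).nullMeasurableSet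
  rcases hT.total (isUpperSet_Ioi α) with hsub | hsub
  · exact ae_eq_of_subset_of_measure_ge (preimage_mono hsub) hmeas.ge hTm (measure_ne_top _ _)
  · exact (ae_eq_of_subset_of_measure_ge (preimage_mono hsub) hmeas.le hIm
      (measure_ne_top _ _)).symm

end TailEvent

section Entropic

variable {Ω : Type*} [MeasurableSpace Ω]

lemma integral_exp_convexComb_le {μ : Measure Ω} {a b : Ω → ℝ} {l : ℝ} (hl : l ∈ Icc (0 : ℝ) 1)
    (ha : Integrable (fun ω => exp (a ω)) μ) (hb : Integrable (fun ω => exp (b ω)) μ)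
    (hab : Integrable (fun ω => exp (l * a ω + (1 - l) * b ω)) μ) :
    ∫ ω, exp (l * a ω + (1 - l) * b ω) ∂μ
      ≤ (∫ ω, exp (a ω) ∂μ) ^ l * (∫ ω, exp (b ω) ∂μ) ^ (1 - l) := by
  have hnn : ∀ c : Ω → ℝ, 0 ≤ᵐ[μ] fun ω => exp (c ω) :=
    fun c => Eventually.of_forall fun ω => (exp_pos _).le
  have hpow : ∀ ω, ENNReal.ofReal (exp (a ω)) ^ l * ENNReal.ofReal (exp (b ω)) ^ (1 - l)
      = ENNReal.ofReal (exp (l * a ω + (1 - l) * b ω)) := fun ω => by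
    rw [ENNReal.ofReal_rpow_of_pos (exp_pos _), ENNReal.ofReal_rpow_of_pos (exp_pos _),
      ← ENNReal.ofReal_mul (rpow_nonneg (exp_pos _).le _), ← exp_mul, ← exp_mul, ← exp_add,
      mul_comm (a ω), mul_comm (b ω)]
  have holder := ENNReal.lintegral_mul_norm_pow_le ha.aemeasurable.ennreal_ofReal
    hb.aemeasurable.ennreal_ofReal hl.1 (sub_nonneg.2 hl.2) (add_sub_cancel l 1)
  simp only [hpow] at holder
  rw [← ofReal_integral_eq_lintegral_ofReal hab (hnn _),
    ← ofReal_integral_eq_lintegral_ofReal ha (hnn _),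
    ← ofReal_integral_eq_lintegral_ofReal hb (hnn _),
    ENNReal.ofReal_rpow_of_nonneg (integral_nonneg fun _ => (exp_pos _).le) hl.1,
    ENNReal.ofReal_rpow_of_nonneg (integral_nonneg fun _ => (exp_pos _).le) (sub_nonneg.2 hl.2),
    ← ENNReal.ofReal_mul (rpow_nonneg (integral_nonneg fun _ => (exp_pos _).le) _)] at holder
  exact (ENNReal.ofReal_le_ofReal_iff (by positivity)).1 holder

lemma log_integral_exp_convexComb_le {μ : Measure Ω} [NeZero μ] {a b : Ω → ℝ} {l : ℝ}
    (hl : l ∈ Icc (0 : ℝ) 1) (ha : Integrable (fun ω => exp (a ω)) μ)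
    (hb : Integrable (fun ω => exp (b ω)) μ)
    (hab : Integrable (fun ω => exp (l * a ω + (1 - l) * b ω)) μ) :
    log (∫ ω, exp (l * a ω + (1 - l) * b ω) ∂μ)
      ≤ l * log (∫ ω, exp (a ω) ∂μ) + (1 - l) * log (∫ ω, exp (b ω) ∂μ) := by
  have hIa := integral_exp_pos ha
  have hIb := integral_exp_pos hb
  calc log (∫ ω, exp (l * a ω + (1 - l) * b ω) ∂μ)
      ≤ log ((∫ ω, exp (a ω) ∂μ) ^ l * (∫ ω, exp (b ω) ∂μ) ^ (1 - l)) :=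
        log_le_log (integral_exp_pos hab) (integral_exp_convexComb_le hl ha hb hab)
    _ = l * log (∫ ω, exp (a ω) ∂μ) + (1 - l) * log (∫ ω, exp (b ω) ∂μ) := by
        rw [log_mul (by positivity) (by positivity), log_rpow hIa, log_rpow hIb]

lemma condExpOn_congr_set {P : Measure Ω} {A B : Set Ω}
    (f : Ω → ℝ) (h : A =ᵐ[P] B) : condExpOn P f A = condExpOn P f B := by
  rw [condExpOn, condExpOn, setIntegral_congr_set h, measure_congr h]

noncomputable def condEntropicRisk (P : Measure Ω) (A : Set Ω) (γ : ℝ) (X : Ω → ℝ) : ℝ :=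
  (1 / γ) * log (condExpOn P (fun ω => exp (γ * X ω)) A)

lemma TCERM_eq_condEntropicRisk {P : Measure Ω} {X : Ω → ℝ} {α : ℝ} {A : Set Ω} (γ : ℝ)
    (h : tailEvent P X α =ᵐ[P] A) : TCERM P X α γ = condEntropicRisk P A γ X := by
  rw [TCERM, condEntropicRisk, condExpOn_congr_set _ h]

lemma condEntropicRisk_convexComb_le {P : Measure Ω} [IsFiniteMeasure P] {A : Set Ω}
    (hA : P A ≠ 0) {γ : ℝ} (hγ : 0 < γ) {X Y : Ω → ℝ} {l : ℝ} (hl : l ∈ Icc (0 : ℝ) 1)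
    (hX : Integrable (fun ω => exp (γ * X ω)) (P.restrict A))
    (hY : Integrable (fun ω => exp (γ * Y ω)) (P.restrict A))
    (hXY : Integrable (fun ω => exp (γ * (l * X ω + (1 - l) * Y ω))) (P.restrict A)) :
    condEntropicRisk P A γ (fun ω => l * X ω + (1 - l) * Y ω)
      ≤ l * condEntropicRisk P A γ X + (1 - l) * condEntropicRisk P A γ Y := by
  have : NeZero (P.restrict A) := ⟨by rwa [Ne, Measure.restrict_eq_zero]⟩
  have hPA : (P A).toReal ≠ 0 := ENNReal.toReal_ne_zero.2 ⟨hA, measure_ne_top _ _⟩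
  have hmix : ∀ ω, γ * (l * X ω + (1 - l) * Y ω) = l * (γ * X ω) + (1 - l) * (γ * Y ω) :=
    fun ω => by ring
  simp only [hmix] at hXY
  have hlog := log_integral_exp_convexComb_le hl hX hY hXY
  simp only [condEntropicRisk, condExpOn, hmix]
  rw [log_div (integral_exp_pos hXY).ne' hPA, log_div (integral_exp_pos hX).ne' hPA,
    log_div (integral_exp_pos hY).ne' hPA]
  calc 1 / γ * (log (∫ ω in A, exp (l * (γ * X ω) + (1 - l) * (γ * Y ω)) ∂P) - log (P A).toReal)
      ≤ 1 / γ * (l * log (∫ ω in A, exp (γ * X ω) ∂P)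
          + (1 - l) * log (∫ ω in A, exp (γ * Y ω) ∂P) - log (P A).toReal) := by
        gcongr
    _ = _ := by ring

end Entropic

theorem TCERM_convex_comonotone_general
    {Ω : Type*} [MeasurableSpace Ω] (P : Measure Ω) [IsProbabilityMeasure P]
    (γ : ℝ) (hγ : 0 < γ) (α : ℝ) (hα : α ∈ Set.Ioo (0:ℝ) 1)
    (V : Ω → ℝ) (hV : Measurable V)
    (hunif : P.map V = volume.restrict (Set.Ioo (0:ℝ) 1))
    (f g : ℝ → ℝ) (hf : Monotone f) (hg : Monotone g)
    (X Y : Ω → ℝ) (hXdef : X = fun ω => f (V ω)) (hYdef : Y = fun ω => g (V ω))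
    (hFX : Continuous (cdfR P X)) (hFY : Continuous (cdfR P Y))
    (hFmix : ∀ t ∈ Set.Icc (0:ℝ) 1,
      Continuous (cdfR P (fun ω => (1 - t) * X ω + t * Y ω)))
    (hint : ∀ t ∈ Set.Icc (0:ℝ) 1,
      Integrable (fun ω => Real.exp (γ * ((1 - t) * X ω + t * Y ω))) P)
    (lam : ℝ) (hlam : lam ∈ Set.Icc (0:ℝ) 1) :
    TCERM P (fun ω => lam * X ω + (1 - lam) * Y ω) α γ
      ≤ lam * TCERM P X α γ + (1 - lam) * TCERM P Y α γ := by
  subst hXdef hYdef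
  have hVα : P (V ⁻¹' Ioi α) = ENNReal.ofReal (1 - α) := by
    rw [← Measure.map_apply hV measurableSet_Ioi, hunif, Measure.restrict_apply measurableSet_Ioi,
      Ioi_inter_Ioo, max_eq_left hα.1.le, Real.volume_Ioo]
  have hmono : Monotone fun u => lam * f u + (1 - lam) * g u := fun u v huv =>
    add_le_add (mul_le_mul_of_nonneg_left (hf huv) hlam.1)
      (mul_le_mul_of_nonneg_left (hg huv) (sub_nonneg.2 hlam.2))
  have hFZ : Continuous (cdfR P fun ω => lam * f (V ω) + (1 - lam) * g (V ω)) := by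
    simpa using hFmix (1 - lam) ⟨sub_nonneg.2 hlam.2, sub_le_self _ hlam.1⟩
  rw [TCERM_eq_condEntropicRisk γ (tailEvent_ae_eq_preimage_Ioi hV hmono hFZ hα hVα),
    TCERM_eq_condEntropicRisk γ (tailEvent_ae_eq_preimage_Ioi hV hf hFX hα hVα),
    TCERM_eq_condEntropicRisk γ (tailEvent_ae_eq_preimage_Ioi hV hg hFY hα hVα)]
  refine condEntropicRisk_convexComb_le (by simp [hVα, hα.2]) hγ hlam ?_ ?_ ?_
  · simpa using (hint 0 ⟨le_rfl, zero_le_one⟩).restrict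
  · simpa using (hint 1 ⟨zero_le_one, le_rfl⟩).restrict
  · simpa using (hint (1 - lam) ⟨sub_nonneg.2 hlam.2, sub_le_self _ hlam.1⟩).restrict

/-- For `γ > 0` the Tail Conditional Entropic Risk Measure is
convex along a pair of comonotone random variables `X = F_X⁻¹(V)`,
`Y = F_Y⁻¹(V)`. -/
theorem TCERM_convex_comonotone
    {Ω : Type*} [MeasurableSpace Ω] (P : Measure Ω) [IsProbabilityMeasure P]
    (γ : ℝ) (hγ : 0 < γ) (α : ℝ) (hα : α ∈ Set.Ioo (0:ℝ) 1)
    (V : Ω → ℝ) (hV : Measurable V)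
    (hunif : P.map V = volume.restrict (Set.Ioo (0:ℝ) 1))
    (f g : ℝ → ℝ) (hf : Monotone f) (hg : Monotone g)
    (hflc : ∀ x : ℝ, ContinuousWithinAt f (Set.Iio x) x)
    (hglc : ∀ x : ℝ, ContinuousWithinAt g (Set.Iio x) x)
    (X Y : Ω → ℝ) (hXdef : X = fun ω => f (V ω)) (hYdef : Y = fun ω => g (V ω))
    (hFX : Continuous (cdfR P X)) (hFY : Continuous (cdfR P Y))
    (hFmix : ∀ t ∈ Set.Icc (0:ℝ) 1,
      Continuous (cdfR P (fun ω => (1 - t) * X ω + t * Y ω)))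
    (hint : ∀ t ∈ Set.Icc (0:ℝ) 1,
      Integrable (fun ω => Real.exp (γ * ((1 - t) * X ω + t * Y ω))) P)
    (lam : ℝ) (hlam : lam ∈ Set.Icc (0:ℝ) 1) :
    TCERM P (fun ω => lam * X ω + (1 - lam) * Y ω) α γ
      ≤ lam * TCERM P X α γ + (1 - lam) * TCERM P Y α γ :=
  TCERM_convex_comonotone_general P γ hγ α hα V hV hunif f g hf hg X Y hXdef hYdef hFX hFY hFmix
    hint lam hlam
end
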